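/- arXiv:math/0509365 — 2 statements merged into one kernel-verified Lean document; each statement's English description precedes it below -/
import Mathlib

section
/- Let Q = {x₁, x₂, x₃} be the three-element quandle whose operation table is given by the matrix with rows (1,1,2), (2,2,1), (3,3,3), i.e., x₁▷x₁ = x₁, x₁▷x₂ = x₁, x₁▷x₃ = x₂, x₂▷x₁ = x₂, x₂▷x₂ = x₂, x₂▷x₃ = x₁, x₃▷x₁ = x₃, x₃▷x₂ = x₃, x₃▷x₃ = x₃. Then Q is not isomorphic to any Alexander quandle: for every module M over Λ = ℤ[t,t⁻¹] there is no injective map f : Q → M satisfying f(xᵢ ▷ xⱼ) = t•f(xᵢ) + (1−t)•f(xⱼ) for all i, j. -/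
open LaurentPolynomial

/-- The three-element quandle with operation table rows (1,1,2), (2,2,1), (3,3,3)
(indices shifted to 0,1,2). -/
def op3 : Fin 3 → Fin 3 → Fin 3 := fun i j =>
  ![![0, 0, 1], ![1, 1, 0], ![2, 2, 2]] i j

/-- The three-element quandle `op3` is not isomorphic to (i.e.,
does not embed as a quandle into) any Alexander quandle. -/
theorem three_element_quandle_not_alexander (M : Type*) [AddCommGroup M]
    [Module (LaurentPolynomial ℤ) M] :
    ¬ ∃ f : Fin 3 → M, Function.Injective f ∧
      ∀ i j : Fin 3, f (op3 i j) =
        (T 1 : LaurentPolynomial ℤ) • f i + ((1 : LaurentPolynomial ℤ) - T 1) • f j := by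
  rintro ⟨f, hinj, h⟩
  have h02 := h 0 2
  have h20 := h 2 0
  simp only [op3, Matrix.cons_val_zero, Matrix.cons_val_two, Matrix.tail_cons,
    Matrix.head_cons] at h02 h20
  have hf : f 1 = f 0 := by linear_combination (norm := module) h02 + h20
  exact absurd (hinj hf) (by decide)
end

section
/- Let A be an abelian group (written additively) and let φ be an automorphism of A, and equip A with the induced Alexander quandle operation a ▷ b = φ(a) + (b − φ(b)). Then there is no injective map f : {x₁, x₂, x₃} → A from the three-element quandle with operation table rows (1,1,2), (2,2,1), (3,3,3) satisfying f(xᵢ ▷ xⱼ) = φ(f(xᵢ)) + (f(xⱼ) − φ(f(xⱼ))) for all i, j; indeed, any such map f (injective or not) must satisfy f(x₁) = f(x₂). -/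
/-- There is no injective quandle homomorphism from the
three-element quandle `op3` into the Alexander quandle induced by an abelian
group `A` with automorphism `φ` (operation `a ▷ b = φ(a) + (b - φ(b))`);
indeed, any such homomorphism `f` satisfies `f x₁ = f x₂`. -/
theorem three_element_quandle_no_injective_hom (A : Type*) [AddCommGroup A]
    (φ : A ≃+ A) :
    (¬ ∃ f : Fin 3 → A, Function.Injective f ∧
        ∀ i j : Fin 3, f (op3 i j) = φ (f i) + (f j - φ (f j))) ∧
    (∀ f : Fin 3 → A,
        (∀ i j : Fin 3, f (op3 i j) = φ (f i) + (f j - φ (f j))) →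
        f 0 = f 1) := by
  have key : ∀ f : Fin 3 → A,
      (∀ i j : Fin 3, f (op3 i j) = φ (f i) + (f j - φ (f j))) → f 0 = f 1 := by
    intro f h
    have e1 := h 0 2
    have e2 := h 2 0
    have hop1 : op3 0 2 = 1 := by decide
    have hop2 : op3 2 0 = 2 := by decide
    rw [hop1] at e1
    rw [hop2] at e2
    -- e1 : f 1 = φ (f 0) + (f 2 - φ (f 2))
    -- e2 : f 2 = φ (f 2) + (f 0 - φ (f 0))
    have e3 : f 2 - φ (f 2) = f 0 - φ (f 0) := by
      nth_rewrite 1 [e2]; abel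
    rw [e3] at e1
    rw [e1]; abel
  refine ⟨?_, key⟩
  rintro ⟨f, hinj, hf⟩
  exact absurd (hinj (key f hf)) (by decide)
end
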